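/- arXiv:2007.13214 — 4 statements merged into one kernel-verified Lean document; each statement's English description precedes it below -/
import Mathlib

section
/- Let n ≥ 1, d ≥ 1, and M = n·d^(n-1). Then the binomial coefficient C(M+n, n) is strictly greater than C(M·d+n-1, n-1). -/
lemma asc_le (d : ℕ) (hd : 1 ≤ d) (a : ℕ) : ∀ k : ℕ,
    (a * d + 1).ascFactorial k ≤ d ^ k * (a + 1).ascFactorial k := by
  intro k
  induction k with
  | zero => simp
  | succ k ih =>
    rw [Nat.ascFactorial_succ, Nat.ascFactorial_succ, pow_succ]
    have h1 : a * d + 1 + k ≤ d * (a + 1 + k) := by nlinarith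
    calc (a * d + 1 + k) * (a * d + 1).ascFactorial k
        ≤ (d * (a + 1 + k)) * (d ^ k * (a + 1).ascFactorial k) :=
          Nat.mul_le_mul h1 ih
      _ = d ^ k * d * ((a + 1 + k) * (a + 1).ascFactorial k) := by ring

theorem stmt_0 (n d : ℕ) (hn : 1 ≤ n) (hd : 1 ≤ d) :
    (n * d ^ (n - 1) * d + n - 1).choose (n - 1) < (n * d ^ (n - 1) + n).choose n := by
  obtain ⟨m, rfl⟩ : ∃ m, n = m + 1 := ⟨n - 1, (Nat.succ_pred_eq_of_pos hn).symm⟩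
  set M := (m + 1) * d ^ m with hM
  simp only [Nat.add_sub_cancel]
  -- multiply by (m+1)! : goal becomes ascFactorial inequality
  have key : (m + 1) * ((M * d + 1).ascFactorial m) < (M + 1).ascFactorial (m + 1) := by
    rw [Nat.ascFactorial_succ]
    have h1 : (M * d + 1).ascFactorial m ≤ d ^ m * (M + 1).ascFactorial m :=
      asc_le d hd M m
    have hpos : 0 < (M + 1).ascFactorial m := Nat.ascFactorial_pos _ _
    calc (m + 1) * ((M * d + 1).ascFactorial m)
        ≤ (m + 1) * (d ^ m * (M + 1).ascFactorial m) := Nat.mul_le_mul_left _ h1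
      _ = M * (M + 1).ascFactorial m := by rw [hM]; ring
      _ < (M + 1 + m) * (M + 1).ascFactorial m := by
          apply Nat.mul_lt_mul_of_lt_of_le (by omega) (le_refl _) hpos
  have e1 : (M * d + 1).ascFactorial m = Nat.factorial m * (M * d + m).choose m :=
    Nat.ascFactorial_eq_factorial_mul_choose _ _
  have e2 : (M + 1).ascFactorial (m + 1) = Nat.factorial (m + 1) * (M + (m + 1)).choose (m + 1) :=
    Nat.ascFactorial_eq_factorial_mul_choose _ _
  rw [e1, e2, Nat.factorial_succ] at key
  have : M * d + m = M * d + (m + 1) - 1 := by omega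
  rw [this] at key
  have := Nat.lt_of_mul_lt_mul_left (a := (m + 1) * Nat.factorial m) (by
    calc (m + 1) * Nat.factorial m * ((M * d + (m + 1) - 1).choose m)
        = (m + 1) * (Nat.factorial m * (M * d + (m + 1) - 1).choose m) := by ring
      _ < (m + 1) * Nat.factorial m * (M + (m + 1)).choose (m + 1) := key)
  convert this using 2 <;> omega
end

section
/- For positive integers n, d and M = n·d^(n-1), one has (M+n) · ∏_{i=1}^{n-1}(M+i) > n · ∏_{i=1}^{n-1}(M·d+i). -/
theorem stmt_1 (n d : ℕ) (hn : 1 ≤ n) (hd : 1 ≤ d) :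
    n * ∏ i ∈ Finset.Ico 1 n, (n * d ^ (n - 1) * d + i) <
      (n * d ^ (n - 1) + n) * ∏ i ∈ Finset.Ico 1 n, (n * d ^ (n - 1) + i) := by
  set M := n * d ^ (n - 1) with hM
  have hMpos : 0 < M := by positivity
  have hPpos : 0 < ∏ i ∈ Finset.Ico 1 n, (M + i) := by
    apply Finset.prod_pos
    intro i _
    omega
  have key : ∏ i ∈ Finset.Ico 1 n, (M * d + i) ≤
      d ^ (n - 1) * ∏ i ∈ Finset.Ico 1 n, (M + i) := by
    have : ∏ i ∈ Finset.Ico 1 n, (M * d + i) ≤ ∏ i ∈ Finset.Ico 1 n, (d * (M + i)) := by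
      apply Finset.prod_le_prod
      · intro i _; exact Nat.zero_le _
      · intro i hi
        simp only [Finset.mem_Ico] at hi
        nlinarith [hi.1]
    calc ∏ i ∈ Finset.Ico 1 n, (M * d + i) ≤ ∏ i ∈ Finset.Ico 1 n, (d * (M + i)) := this
      _ = d ^ (n - 1) * ∏ i ∈ Finset.Ico 1 n, (M + i) := by
          rw [Finset.prod_mul_distrib, Finset.prod_const, Nat.card_Ico]
  calc n * ∏ i ∈ Finset.Ico 1 n, (M * d + i)
      ≤ n * (d ^ (n - 1) * ∏ i ∈ Finset.Ico 1 n, (M + i)) := Nat.mul_le_mul_left _ key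
    _ = M * ∏ i ∈ Finset.Ico 1 n, (M + i) := by rw [hM]; ring
    _ < (M + n) * ∏ i ∈ Finset.Ico 1 n, (M + i) := by
        exact Nat.mul_lt_mul_of_lt_of_le (by omega) le_rfl hPpos
end

section
/- Let K be a field and f₁, …, f_{n+1} ∈ K[x₁, …, xₙ] homogeneous polynomials of degree d ≥ 1. Then there exists a nonzero homogeneous polynomial A ∈ K[y₁, …, y_{n+1}] of degree M = n·d^{n-1} such that A(f₁, …, f_{n+1}) = 0. -/
/-!
Substituting the `fᵢ` is a linear map from the forms of degree `M` in `n + 1` variables to the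
forms of degree `d * M` in `n` variables, of dimensions `C(M + n, n)` and `C(d * M + n - 1, n - 1)`.
Since `C(d * M + n - 1, n - 1) ≤ d ^ (n - 1) * C(M + n - 1, n - 1)` and
`n * C(M + n, n) = (M + n) * C(M + n - 1, n - 1)`, the source is larger once `M ≥ n * d ^ (n - 1)`,
so the map has a nonzero kernel.
-/

open MvPolynomial Module

namespace Nat

theorem choose_mul_add_le_pow_mul_choose {d : ℕ} (hd : 0 < d) (m k : ℕ) :
    (d * m + k).choose k ≤ d ^ k * (m + k).choose k := by
  induction k with
  | zero => simp
  | succ k ih =>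
    refine Nat.le_of_mul_le_mul_right ?_ k.succ_pos
    calc (d * m + (k + 1)).choose (k + 1) * (k + 1)
        = (d * m + k + 1) * (d * m + k).choose k := (add_one_mul_choose_eq _ _).symm
      _ ≤ (d * (m + k + 1)) * (d ^ k * (m + k).choose k) := by
        gcongr
        nlinarith
      _ = d ^ (k + 1) * ((m + k + 1) * (m + k).choose k) := by ring
      _ = d ^ (k + 1) * (m + (k + 1)).choose (k + 1) * (k + 1) := by
        rw [add_one_mul_choose_eq, mul_assoc, add_assoc]

theorem choose_mul_add_lt_choose_add_succ {d m k : ℕ} (hd : 0 < d) (hm : (k + 1) * d ^ k ≤ m) :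
    (d * m + k).choose k < (m + (k + 1)).choose (k + 1) := by
  refine Nat.lt_of_mul_lt_mul_left (a := k + 1) ?_
  calc (k + 1) * (d * m + k).choose k
      ≤ (k + 1) * d ^ k * (m + k).choose k := by
        rw [mul_assoc]
        gcongr
        exact choose_mul_add_le_pow_mul_choose hd m k
    _ ≤ m * (m + k).choose k := by gcongr
    _ < (m + k + 1) * (m + k).choose k := by
        gcongr
        · exact choose_pos (by omega)
        · omega
    _ = (k + 1) * (m + (k + 1)).choose (k + 1) := by
        rw [add_one_mul_choose_eq, mul_comm, add_assoc]

end Nat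

namespace MvPolynomial

variable {σ ι K : Type*} [Field K]

theorem finrank_homogeneousSubmodule [Fintype σ] (m : ℕ) :
    finrank K (homogeneousSubmodule σ K m) = (Fintype.card σ + m - 1).choose m := by
  classical
  have e : {x : σ →₀ ℕ | x.degree = m} ≃ Sym σ m :=
    (Equiv.subtypeEquivRight fun x => by simp [Finsupp.degree, Finsupp.sum]; exact Iff.rfl).trans
      (Sym.equivNatSum σ m).symm
  rw [homogeneousSubmodule_eq_finsupp_supported,
    ((AddMonoidAlgebra.supportedEquivFinsupp _).trans (Finsupp.domLCongr e)).finrank_eq,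
    finrank_finsupp_self, Sym.card_sym_eq_choose]

theorem finrank_homogeneousSubmodule_fin_succ (k m : ℕ) :
    finrank K (homogeneousSubmodule (Fin (k + 1)) K m) = (m + k).choose k := by
  rw [finrank_homogeneousSubmodule, Fintype.card_fin, add_right_comm, Nat.add_sub_cancel,
    add_comm, Nat.choose_symm_add]

noncomputable def aevalHomogeneous {d : ℕ} (f : ι → MvPolynomial σ K)
    (hf : ∀ i, (f i).IsHomogeneous d) (m : ℕ) :
    homogeneousSubmodule ι K m →ₗ[K] homogeneousSubmodule σ K (d * m) :=
  ((aeval f).toLinearMap ∘ₗ (homogeneousSubmodule ι K m).subtype).codRestrict _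
    fun A => A.2.aeval f hf

theorem exists_isHomogeneous_aeval_eq_zero [Finite ι] [Finite σ] {d m : ℕ}
    (f : ι → MvPolynomial σ K) (hf : ∀ i, (f i).IsHomogeneous d)
    (h : finrank K (homogeneousSubmodule σ K (d * m)) <
      finrank K (homogeneousSubmodule ι K m)) :
    ∃ A : MvPolynomial ι K, A ≠ 0 ∧ A.IsHomogeneous m ∧ aeval f A = 0 := by
  have := Module.Finite.iff_fg.mpr (homogeneousSubmodule_fg ι K m)
  have := Module.Finite.iff_fg.mpr (homogeneousSubmodule_fg σ K (d * m))
  obtain ⟨⟨A, hA⟩, hker, hA0⟩ :=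
    Submodule.exists_mem_ne_zero_of_ne_bot (LinearMap.ker_ne_bot_of_finrank_lt
      (f := aevalHomogeneous f hf m) h)
  exact ⟨A, fun h => hA0 (Subtype.ext h), hA, congrArg Subtype.val hker⟩

end MvPolynomial

theorem stmt_13 (K : Type*) [Field K] (n d : ℕ) (hn : 0 < n) (hd : 1 ≤ d)
    (f : Fin (n + 1) → MvPolynomial (Fin n) K)
    (hf : ∀ i, (f i).IsHomogeneous d) :
    ∃ A : MvPolynomial (Fin (n + 1)) K,
      A ≠ 0 ∧ A.IsHomogeneous (n * d ^ (n - 1)) ∧ MvPolynomial.aeval f A = 0 := by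
  obtain ⟨k, rfl⟩ : ∃ k, n = k + 1 := ⟨n - 1, by omega⟩
  refine exists_isHomogeneous_aeval_eq_zero f hf ?_
  rw [finrank_homogeneousSubmodule_fin_succ, finrank_homogeneousSubmodule_fin_succ]
  exact Nat.choose_mul_add_lt_choose_add_succ hd (by simp)
end

section
/- Let K be an infinite field and f₁, …, f_m ∈ K[x₁, …, xₙ] with m ≥ n+2. Then there exist g₁, …, g_{n+1} ∈ K[x₁, …, xₙ], each a K-linear combination of f₁, …, f_m, such that √(f₁, …, f_m) = √(g₁, …, g_{n+1}). -/
/-!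
Among `n + 2` polynomials in `n` variables there is a nonzero homogeneous relation `Q(f) = 0`:
the elements `t • fᵢ` of `K[x₁, …, xₙ][t]`, a ring of transcendence degree `n + 1`, are
algebraically dependent, and every homogeneous component of a relation among them is a relation
among the `fᵢ`. As `K` is infinite, `Q(w) ≠ 0` for some `w` with `w₀ = 1`. Modulo the ideal of the
`gⱼ = fⱼ₊₁ - wⱼ₊₁ f₀` we have `fᵢ ≡ wᵢ f₀`, hence `0 = Q(f) ≡ Q(w) f₀ ^ d`, so `f₀` and then every
`fᵢ` lies in the radical of `(g)`. This drops one generator without changing the radical, and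
repeating it leaves `n + 1`.
-/

open MvPolynomial

namespace MvPolynomial

theorem IsHomogeneous.aeval_mul_left {σ R A : Type*} [CommSemiring R] [CommSemiring A]
    [Algebra R A] {φ : MvPolynomial σ R} {n : ℕ} (hφ : φ.IsHomogeneous n) (r : A) (x : σ → A) :
    MvPolynomial.aeval (fun i ↦ r * x i) φ = r ^ n * MvPolynomial.aeval x φ := by
  simp only [aeval_def, eval₂_eq, Finset.mul_sum]
  refine Finset.sum_congr rfl fun d hd ↦ ?_
  have hdeg : ∑ i ∈ d.support, d i = n := by
    simpa [Finsupp.weight_apply, Finsupp.sum] using hφ (mem_support_iff.mp hd)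
  simp only [mul_pow, Finset.prod_mul_distrib, Finset.prod_pow_eq_pow_sum, hdeg]
  ring

theorem coeff_aeval_X_mul_C {ι R S : Type*} [CommSemiring R] [CommSemiring S] [Algebra R S]
    (P : MvPolynomial ι R) (f : ι → S) (d : ℕ) :
    (aeval (fun i ↦ Polynomial.X * Polynomial.C (f i)) P).coeff d =
      aeval f (homogeneousComponent d P) := by
  have hcomp (e : ℕ) : aeval (fun i ↦ Polynomial.X * Polynomial.C (f i)) (homogeneousComponent e P)
      = Polynomial.C (aeval f (homogeneousComponent e P)) * Polynomial.X ^ e := by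
    rw [(homogeneousComponent_isHomogeneous e P).aeval_mul_left, mul_comm]
    congr 1
    simpa using (comp_aeval_apply (f := f) (Polynomial.CAlgHom (R := R) (A := S))
      (homogeneousComponent e P)).symm
  conv_lhs => rw [← sum_homogeneousComponent P]
  simp only [map_sum, Polynomial.finsetSum_coeff, hcomp, Polynomial.coeff_C_mul_X_pow,
    Finset.sum_ite_eq, Finset.mem_range]
  split_ifs with hd
  · rfl
  · rw [homogeneousComponent_eq_zero d P (by omega), map_zero]

theorem exists_isHomogeneous_aeval_eq_zero_s19 {σ ι R : Type*} [CommRing R] [IsDomain R]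
    [Fintype σ] [Fintype ι] (f : ι → MvPolynomial σ R)
    (hcard : Fintype.card σ + 1 < Fintype.card ι) :
    ∃ d, ∃ Q : MvPolynomial ι R, Q.IsHomogeneous d ∧ Q ≠ 0 ∧ aeval f Q = 0 := by
  have hdep : ¬ AlgebraicIndependent R fun i ↦ Polynomial.X * Polynomial.C (f i) := by
    intro hind
    have := hind.lift_cardinalMk_le_trdeg
    rw [← (optionEquivLeft R σ).trdeg_eq, MvPolynomial.trdeg_of_isDomain] at this
    simp only [Cardinal.mk_fintype, Cardinal.lift_natCast, Fintype.card_option, Nat.cast_add,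
      Nat.cast_one, Cardinal.lift_add, Cardinal.lift_one] at this
    exact hcard.not_ge (by exact_mod_cast this)
  obtain ⟨P, hP, hP0⟩ : ∃ P : MvPolynomial ι R,
      aeval (fun i ↦ Polynomial.X * Polynomial.C (f i)) P = 0 ∧ P ≠ 0 := by
    simpa [algebraicIndependent_iff] using hdep
  obtain ⟨d, hd⟩ : ∃ d, homogeneousComponent d P ≠ 0 := by
    by_contra! h
    exact hP0 (by rw [← sum_homogeneousComponent P]; simp [h])
  exact ⟨d, _, homogeneousComponent_isHomogeneous d P, hd,
    by rw [← coeff_aeval_X_mul_C, hP, Polynomial.coeff_zero]⟩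

theorem IsHomogeneous.exists_eq_one_and_eval_ne_zero {σ K : Type*} [Field K] [Infinite K]
    {Q : MvPolynomial σ K} {d : ℕ} (hQ : Q.IsHomogeneous d) (hQ0 : Q ≠ 0) (i : σ) :
    ∃ w : σ → K, w i = 1 ∧ eval w Q ≠ 0 := by
  -- the factor `X i` forces `z i ≠ 0`; rescaling by `(z i)⁻¹` then keeps `eval z Q ≠ 0`
  obtain ⟨z, hz⟩ : ∃ z : σ → K, eval z (X i * Q) ≠ 0 := by
    by_contra! h
    exact mul_ne_zero (X_ne_zero i) hQ0 (MvPolynomial.funext fun z ↦ by simpa using h z)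
  rw [eval_mul, eval_X] at hz
  have hzi : z i ≠ 0 := left_ne_zero_of_mul hz
  refine ⟨fun j ↦ (z i)⁻¹ * z j, inv_mul_cancel₀ hzi, ?_⟩
  rw [← aeval_eq_eval, hQ.aeval_mul_left, aeval_eq_eval]
  exact mul_ne_zero (pow_ne_zero _ (inv_ne_zero hzi)) (right_ne_zero_of_mul hz)

theorem IsHomogeneous.pow_mem_of_aeval_eq_zero {ι R A : Type*} [CommRing R] [CommRing A]
    [Algebra R A] {I : Ideal A} {Q : MvPolynomial ι R} {d : ℕ} (hQ : Q.IsHomogeneous d)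
    {f : ι → A} (hQf : MvPolynomial.aeval f Q = 0) {w : ι → R} (hw : IsUnit (eval w Q)) {a : A}
    (hfw : ∀ i, f i - algebraMap R A (w i) * a ∈ I) : a ^ d ∈ I := by
  let π := Ideal.Quotient.mkₐ R I
  have hπf : (fun i ↦ π (f i)) = fun i ↦ π a * algebraMap R (A ⧸ I) (w i) := by
    funext i
    rw [mul_comm, ← sub_eq_zero, ← AlgHom.commutes π, ← map_mul, ← map_sub,
      Ideal.Quotient.mkₐ_eq_mk, Ideal.Quotient.eq_zero_iff_mem]
    exact hfw i
  have hzero : π (a ^ d) * algebraMap R (A ⧸ I) (eval w Q) = 0 := by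
    calc π (a ^ d) * algebraMap R (A ⧸ I) (eval w Q)
        = MvPolynomial.aeval (fun i ↦ π a * algebraMap R (A ⧸ I) (w i)) Q := by
          rw [hQ.aeval_mul_left, map_pow, ← aeval_eq_eval, ← aeval_algebraMap_apply,
            Function.comp_def]
      _ = π (MvPolynomial.aeval f Q) := by rw [comp_aeval_apply, hπf]
      _ = 0 := by rw [hQf, map_zero]
  rwa [(hw.map _).mul_left_eq_zero, Ideal.Quotient.mkₐ_eq_mk, Ideal.Quotient.eq_zero_iff_mem]
    at hzero

end MvPolynomial

theorem exists_radical_span_eq_of_isHomogeneous_aeval_eq_zero {K A : Type*} [Field K]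
    [Infinite K] [CommRing A] [Algebra K A] {k d : ℕ} {f : Fin (k + 1) → A}
    {Q : MvPolynomial (Fin (k + 1)) K} (hQ : Q.IsHomogeneous d) (hQ0 : Q ≠ 0)
    (hQf : aeval f Q = 0) :
    ∃ g : Fin k → A, (∀ j, g j ∈ Submodule.span K (Set.range f)) ∧
      (Ideal.span (Set.range f)).radical = (Ideal.span (Set.range g)).radical := by
  obtain ⟨w, hw0, hw⟩ := hQ.exists_eq_one_and_eval_ne_zero hQ0 0
  let g : Fin k → A := fun j ↦ f j.succ - algebraMap K A (w j.succ) * f 0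
  have hfw : ∀ i, f i - algebraMap K A (w i) * f 0 ∈ Ideal.span (Set.range g) :=
    Fin.cases (by simp [hw0]) fun j ↦ Ideal.subset_span ⟨j, rfl⟩
  have hf0 : f 0 ∈ (Ideal.span (Set.range g)).radical :=
    ⟨d, hQ.pow_mem_of_aeval_eq_zero hQf (isUnit_iff_ne_zero.mpr hw) hfw⟩
  refine ⟨g, fun j ↦ ?_, le_antisymm ?_ ?_⟩
  · show f j.succ - algebraMap K A (w j.succ) * f 0 ∈ _
    rw [← Algebra.smul_def]
    exact sub_mem (Submodule.subset_span ⟨_, rfl⟩)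
      (Submodule.smul_mem _ _ (Submodule.subset_span ⟨0, rfl⟩))
  · refine Ideal.radical_le_radical_iff.mpr (Ideal.span_le.mpr ?_)
    rintro _ ⟨i, rfl⟩
    rw [← sub_add_cancel (f i) (algebraMap K A (w i) * f 0)]
    exact add_mem (Ideal.le_radical (hfw i)) (Ideal.mul_mem_left _ _ hf0)
  · refine Ideal.radical_mono (Ideal.span_le.mpr ?_)
    rintro _ ⟨j, rfl⟩
    exact sub_mem (Ideal.subset_span ⟨_, rfl⟩)
      (Ideal.mul_mem_left _ _ (Ideal.subset_span ⟨0, rfl⟩))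

theorem exists_radical_span_eq_of_le {K : Type*} [Field K] [Infinite K] {n m : ℕ}
    (hm : n + 1 ≤ m) (f : Fin m → MvPolynomial (Fin n) K) :
    ∃ g : Fin (n + 1) → MvPolynomial (Fin n) K, (∀ j, g j ∈ Submodule.span K (Set.range f)) ∧
      (Ideal.span (Set.range f)).radical = (Ideal.span (Set.range g)).radical := by
  induction m, hm using Nat.le_induction with
  | base => exact ⟨f, fun j ↦ Submodule.subset_span ⟨j, rfl⟩, rfl⟩
  | succ M hM ih =>
    obtain ⟨d, Q, hQ, hQ0, hQf⟩ :=
      exists_isHomogeneous_aeval_eq_zero_s19 f (by simp only [Fintype.card_fin]; omega)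
    obtain ⟨g', hg'f, hfg'⟩ := exists_radical_span_eq_of_isHomogeneous_aeval_eq_zero hQ hQ0 hQf
    obtain ⟨g, hgg', hg'g⟩ := ih g'
    exact ⟨g, fun j ↦ Submodule.span_le.mpr (Set.range_subset_iff.mpr hg'f) (hgg' j),
      hfg'.trans hg'g⟩

theorem stmt_19_general (K : Type*) [Field K] [Infinite K] (n m : ℕ)
    (hm : n + 2 ≤ m) (f : Fin m → MvPolynomial (Fin n) K) :
    ∃ g : Fin (n + 1) → MvPolynomial (Fin n) K,
      (∀ j, ∃ c : Fin m → K, g j = ∑ i, MvPolynomial.C (c i) * f i) ∧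
      (Ideal.span (Set.range f)).radical = (Ideal.span (Set.range g)).radical := by
  obtain ⟨g, hgf, hg⟩ := exists_radical_span_eq_of_le (by omega : n + 1 ≤ m) f
  refine ⟨g, fun j ↦ ?_, hg⟩
  obtain ⟨c, hc⟩ := (Submodule.mem_span_range_iff_exists_fun K).mp (hgf j)
  exact ⟨c, by simp only [← hc, C_mul']⟩

theorem stmt_19 (K : Type*) [Field K] [Infinite K] (n m : ℕ) (hn : 0 < n)
    (hm : n + 2 ≤ m) (f : Fin m → MvPolynomial (Fin n) K) :
    ∃ g : Fin (n + 1) → MvPolynomial (Fin n) K,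
      (∀ j, ∃ c : Fin m → K, g j = ∑ i, MvPolynomial.C (c i) * f i) ∧
      (Ideal.span (Set.range f)).radical = (Ideal.span (Set.range g)).radical :=
  stmt_19_general K n m hm f
end
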